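/- arXiv:2210.17373 — 3 statements merged into one kernel-verified Lean document; each statement's English description precedes it below -/
import Mathlib

section
/- Let (I ∪ J, w) be the assignment game with row players I = {1,2} and column players J = {3,4} induced by the 2×2 matrix with entries a_{13} = a, a_{14} = b, a_{23} = c, a_{24} = 0, where a, b, c > 0. If b + c > a, then (I ∪ J, w) admits no PMAS. -/
open Finset

/-- A population monotonic allocation scheme (PMAS) for the TU game `w` on the
finite player set `α`: subgame efficiency on every nonempty coalition, and
individual payoff monotonicity along coalition inclusion. -/
def IsPMAS {α : Type*} [Fintype α] (w : Finset α → ℝ) (x : Finset α → α → ℝ) : Prop :=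
  (∀ S : Finset α, S.Nonempty → ∑ i ∈ S, x S i = w S) ∧
  (∀ S T : Finset α, S ⊆ T → ∀ i ∈ S, x S i ≤ x T i)

/-- `μ` is a matching inside coalition `S`: every pair uses players of `S`,
and each player appears in at most one pair. -/
def IsMatching {I J : Type*} (S : Finset (I ⊕ J)) (μ : Finset (I × J)) : Prop :=
  (∀ p ∈ μ, Sum.inl p.1 ∈ S ∧ Sum.inr p.2 ∈ S) ∧
  (∀ p ∈ μ, ∀ q ∈ μ, p.1 = q.1 → p = q) ∧
  (∀ p ∈ μ, ∀ q ∈ μ, p.2 = q.2 → p = q)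

/-- The assignment game induced by the matrix `A`. -/
noncomputable def assignGame {I J : Type*} [Fintype I] [Fintype J]
    (A : I → J → ℝ) (S : Finset (I ⊕ J)) : ℝ :=
  sSup ((fun μ : Finset (I × J) => ∑ p ∈ μ, A p.1 p.2) '' {μ | IsMatching S μ})

/-- `x` is a core allocation of the game `w`. -/
def InCore {α : Type*} [Fintype α] (w : Finset α → ℝ) (x : α → ℝ) : Prop :=
  (∑ i, x i) = w Finset.univ ∧ ∀ S : Finset α, w S ≤ ∑ i ∈ S, x i

/-- `x` is PMAS-extendable in the game `w`. -/
def PMASExtendable {α : Type*} [Fintype α] (w : Finset α → ℝ) (x : α → ℝ) : Prop :=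
  ∃ y, IsPMAS w y ∧ ∀ i, y Finset.univ i = x i

/-- The upper (utopia) vector. -/
noncomputable def upperVec {α : Type*} [Fintype α] [DecidableEq α]
    (v : Finset α → ℝ) (i : α) : ℝ :=
  v Finset.univ - v (Finset.univ.erase i)

/-- The lower (minimal right) vector. -/
noncomputable def lowerVec {α : Type*} [Fintype α] [DecidableEq α]
    (v : Finset α → ℝ) (i : α) : ℝ :=
  sSup {t | ∃ S : Finset α, i ∈ S ∧ t = v S - ∑ j ∈ S.erase i, upperVec v j}

/-- `τ` is a tau-value of the game `v`. -/
def IsTauValue {α : Type*} [Fintype α] [DecidableEq α] (v : Finset α → ℝ) (τ : α → ℝ) : Prop :=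
  ∃ κ : ℝ, 0 ≤ κ ∧ κ ≤ 1 ∧ (∀ i, τ i = κ * upperVec v i + (1 - κ) * lowerVec v i) ∧
    ∑ i, τ i = v Finset.univ

open scoped Classical in
/-- The nondecreasingly ordered list of satisfactions of the nonempty proper
coalitions at allocation `x`. -/
noncomputable def satList {α : Type*} [Fintype α] (v : Finset α → ℝ) (x : α → ℝ) : List ℝ :=
  ((Finset.univ.filter (fun S : Finset α => S.Nonempty ∧ S ≠ Finset.univ)).val.map
    (fun S => ∑ i ∈ S, x i - v S)).sort (· ≤ ·)

/-- `x` is the nucleolus of `v`: a core allocation lexicographically maximizing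
the nondecreasingly ordered satisfaction vector over the core. -/
noncomputable def IsNucleolus {α : Type*} [Fintype α] (v : Finset α → ℝ) (x : α → ℝ) : Prop :=
  InCore v x ∧ ∀ y, InCore v y →
    satList v y = satList v x ∨ List.Lex (· < ·) (satList v y) (satList v x)

/-- `A` has Γ-shaped support with corner `(i1, j1)`. -/
def GammaShaped {I J : Type*} (A : I → J → ℝ) (i1 : I) (j1 : J) : Prop :=
  (∀ k l, (k = i1 ∨ l = j1) → 0 < A k l) ∧ (∀ k l, k ≠ i1 → l ≠ j1 → A k l = 0)

/-- The corner `(i1, j1)` of `A` is dominant. -/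
def DominantCorner {I J : Type*} (A : I → J → ℝ) (i1 : I) (j1 : J) : Prop :=
  ∀ k l, k ≠ i1 → l ≠ j1 → A i1 l + A k j1 ≤ A i1 j1

lemma sum_eq_aux (A : Fin 2 → Fin 2 → ℝ) (μ : Finset (Fin 2 × Fin 2)) :
    ∑ p ∈ μ, A p.1 p.2 =
      (if (0 : Fin 2 × Fin 2) ∈ μ then A 0 0 else 0) +
      (if ((0:Fin 2),(1:Fin 2)) ∈ μ then A 0 1 else 0) +
      (if ((1:Fin 2),(0:Fin 2)) ∈ μ then A 1 0 else 0) +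
      (if ((1:Fin 2),(1:Fin 2)) ∈ μ then A 1 1 else 0) := by
  have : ∑ p ∈ μ, A p.1 p.2 = ∑ p ∈ (univ : Finset (Fin 2 × Fin 2)),
      if p ∈ μ then A p.1 p.2 else 0 := by
    rw [Finset.sum_ite_mem, univ_inter]
  rw [this, Fintype.sum_prod_type]
  simp [Fin.sum_univ_two]
  rw [Prod.mk_zero_zero]
  ring

lemma assignGame_eq {v : ℝ} {I J : Type*} [Fintype I] [Fintype J] (A : I → J → ℝ)
    (S : Finset (I ⊕ J))
    (hmem : ∃ μ, IsMatching S μ ∧ ∑ p ∈ μ, A p.1 p.2 = v)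
    (hub : ∀ μ, IsMatching S μ → ∑ p ∈ μ, A p.1 p.2 ≤ v) :
    assignGame A S = v := by
  unfold assignGame
  apply le_antisymm
  · apply csSup_le
    · obtain ⟨μ, h1, h2⟩ := hmem; exact ⟨v, μ, h1, h2⟩
    · rintro x ⟨μ, h1, rfl⟩; exact hub μ h1
  · obtain ⟨μ, h1, h2⟩ := hmem
    exact h2 ▸ le_csSup ⟨v, by rintro x ⟨μ', h1', rfl⟩; exact hub μ' h1'⟩ ⟨μ, h1, rfl⟩

section Vals
variable (a b c : ℝ)

local notation "A" => (![![a, b], ![c, 0]] : Fin 2 → Fin 2 → ℝ)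

lemma val_13 (ha : 0 ≤ a) :
    assignGame A ({Sum.inl 0, Sum.inr 0} : Finset (Fin 2 ⊕ Fin 2)) = a := by
  apply assignGame_eq
  · exact ⟨{(0 : Fin 2 × Fin 2)}, by unfold IsMatching; refine ⟨?_,?_,?_⟩ <;> decide, by simp⟩
  · rintro μ ⟨h1, h2, h3⟩
    rw [sum_eq_aux]
    have e01 : ((0:Fin 2),(1:Fin 2)) ∉ μ := fun hp => by simpa using (h1 _ hp).2
    have e11 : ((1:Fin 2),(1:Fin 2)) ∉ μ := fun hp => by simpa using (h1 _ hp).2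
    have e10 : ((1:Fin 2),(0:Fin 2)) ∉ μ := fun hp => by simpa using (h1 _ hp).1
    simp [e01, e11, e10]
    split_ifs <;> simp [ha]

lemma val_14 (hb : 0 ≤ b) :
    assignGame A ({Sum.inl 0, Sum.inr 1} : Finset (Fin 2 ⊕ Fin 2)) = b := by
  apply assignGame_eq
  · exact ⟨{((0:Fin 2),(1:Fin 2))}, by unfold IsMatching; refine ⟨?_,?_,?_⟩ <;> decide, by simp⟩
  · rintro μ ⟨h1, h2, h3⟩
    rw [sum_eq_aux]
    have e00 : (0 : Fin 2 × Fin 2) ∉ μ := fun hp => by simpa using (h1 _ hp).2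
    have e10 : ((1:Fin 2),(0:Fin 2)) ∉ μ := fun hp => by simpa using (h1 _ hp).1
    have e11 : ((1:Fin 2),(1:Fin 2)) ∉ μ := fun hp => by simpa using (h1 _ hp).1
    simp [e00, e10, e11]
    split_ifs <;> simp [hb]

lemma val_23 (hc : 0 ≤ c) :
    assignGame A ({Sum.inl 1, Sum.inr 0} : Finset (Fin 2 ⊕ Fin 2)) = c := by
  apply assignGame_eq
  · exact ⟨{((1:Fin 2),(0:Fin 2))}, by unfold IsMatching; refine ⟨?_,?_,?_⟩ <;> decide, by simp⟩
  · rintro μ ⟨h1, h2, h3⟩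
    rw [sum_eq_aux]
    have e00 : (0 : Fin 2 × Fin 2) ∉ μ := fun hp => by simpa using (h1 _ hp).1
    have e01 : ((0:Fin 2),(1:Fin 2)) ∉ μ := fun hp => by simpa using (h1 _ hp).1
    have e11 : ((1:Fin 2),(1:Fin 2)) ∉ μ := fun hp => by simpa using (h1 _ hp).2
    simp [e00, e01, e11]
    split_ifs <;> simp [hc]

lemma val_Tc (ha : 0 ≤ a) (hc : 0 ≤ c) :
    assignGame A ({Sum.inl 0, Sum.inl 1, Sum.inr 0} : Finset (Fin 2 ⊕ Fin 2)) = max a c := by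
  apply assignGame_eq
  · rcases le_total c a with h | h
    · exact ⟨{(0 : Fin 2 × Fin 2)}, by unfold IsMatching; refine ⟨?_,?_,?_⟩ <;> decide,
        by simp [max_eq_left h]⟩
    · exact ⟨{((1:Fin 2),(0:Fin 2))}, by unfold IsMatching; refine ⟨?_,?_,?_⟩ <;> decide,
        by simp [max_eq_right h]⟩
  · rintro μ ⟨h1, h2, h3⟩
    rw [sum_eq_aux]
    have e01 : ((0:Fin 2),(1:Fin 2)) ∉ μ := fun hp => by simpa using (h1 _ hp).2
    have e11 : ((1:Fin 2),(1:Fin 2)) ∉ μ := fun hp => by simpa using (h1 _ hp).2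
    by_cases h00 : (0 : Fin 2 × Fin 2) ∈ μ <;>
    by_cases h10 : ((1:Fin 2),(0:Fin 2)) ∈ μ <;>
    first
      | exact absurd (h3 _ h00 _ h10 rfl) (by decide)
      | (simp [e01, e11, h00, h10];
         linarith [le_max_left a c, le_max_right a c])
      | simp [e01, e11, h00, h10, le_max_iff, ha]

lemma val_Td (ha : 0 ≤ a) (hb : 0 ≤ b) :
    assignGame A ({Sum.inl 0, Sum.inr 0, Sum.inr 1} : Finset (Fin 2 ⊕ Fin 2)) = max a b := by
  apply assignGame_eq
  · rcases le_total b a with h | h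
    · exact ⟨{(0 : Fin 2 × Fin 2)}, by unfold IsMatching; refine ⟨?_,?_,?_⟩ <;> decide,
        by simp [max_eq_left h]⟩
    · exact ⟨{((0:Fin 2),(1:Fin 2))}, by unfold IsMatching; refine ⟨?_,?_,?_⟩ <;> decide,
        by simp [max_eq_right h]⟩
  · rintro μ ⟨h1, h2, h3⟩
    rw [sum_eq_aux]
    have e10 : ((1:Fin 2),(0:Fin 2)) ∉ μ := fun hp => by simpa using (h1 _ hp).1
    have e11 : ((1:Fin 2),(1:Fin 2)) ∉ μ := fun hp => by simpa using (h1 _ hp).1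
    by_cases h00 : (0 : Fin 2 × Fin 2) ∈ μ <;>
    by_cases h01 : ((0:Fin 2),(1:Fin 2)) ∈ μ <;>
    first
      | exact absurd (h2 _ h00 _ h01 rfl) (by decide)
      | (simp [e10, e11, h00, h01];
         linarith [le_max_left a b, le_max_right a b])
      | simp [e10, e11, h00, h01, le_max_iff, ha]

lemma val_N (ha : 0 ≤ a) (hb : 0 ≤ b) (hc : 0 ≤ c) (hdom : a ≤ b + c) :
    assignGame A (univ : Finset (Fin 2 ⊕ Fin 2)) = b + c := by
  apply assignGame_eq
  · refine ⟨{((0:Fin 2),(1:Fin 2)), ((1:Fin 2),(0:Fin 2))},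
      by unfold IsMatching; refine ⟨?_,?_,?_⟩ <;> decide, ?_⟩
    rw [Finset.sum_pair (by decide)]
    simp
  · rintro μ ⟨h1, h2, h3⟩
    rw [sum_eq_aux]
    by_cases h00 : (0 : Fin 2 × Fin 2) ∈ μ <;>
    by_cases h01 : ((0:Fin 2),(1:Fin 2)) ∈ μ <;>
    by_cases h10 : ((1:Fin 2),(0:Fin 2)) ∈ μ <;>
    by_cases h11 : ((1:Fin 2),(1:Fin 2)) ∈ μ <;>
    first
      | exact absurd (h2 _ h00 _ h01 rfl) (by decide)
      | exact absurd (h2 _ h10 _ h11 rfl) (by decide)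
      | exact absurd (h3 _ h00 _ h10 rfl) (by decide)
      | exact absurd (h3 _ h01 _ h11 rfl) (by decide)
      | (simp [h00, h01, h10, h11]; linarith)
      | (simp [h00, h01, h10, h11])

end Vals

/-- In the 2×2 assignment game with matrix `![![a,b],![c,0]]`,
`a, b, c > 0` and `b + c > a`, there is no PMAS. -/
theorem assignGame_2x2_nondominant_no_pmas (a b c : ℝ)
    (ha : 0 < a) (hb : 0 < b) (hc : 0 < c) (hdom : a < b + c) :
    ¬ ∃ y, IsPMAS (assignGame ![![a, b], ![c, 0]]) y := by
  rintro ⟨y, heff, hmono⟩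
  -- players
  set i1 : Fin 2 ⊕ Fin 2 := Sum.inl 0
  set i2 : Fin 2 ⊕ Fin 2 := Sum.inl 1
  set j1 : Fin 2 ⊕ Fin 2 := Sum.inr 0
  set j2 : Fin 2 ⊕ Fin 2 := Sum.inr 1
  -- coalitions
  set S13 : Finset (Fin 2 ⊕ Fin 2) := {i1, j1}
  set S14 : Finset (Fin 2 ⊕ Fin 2) := {i1, j2}
  set S23 : Finset (Fin 2 ⊕ Fin 2) := {i2, j1}
  set Tc : Finset (Fin 2 ⊕ Fin 2) := {i1, i2, j1}
  set Td : Finset (Fin 2 ⊕ Fin 2) := {i1, j1, j2}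
  -- efficiency equalities
  have hN : y univ i1 + y univ i2 + (y univ j1 + y univ j2) = b + c := by
    have := heff univ ⟨i1, mem_univ _⟩
    rw [show (assignGame ![![a, b], ![c, 0]] : Finset (Fin 2 ⊕ Fin 2) → ℝ) = _ from rfl] at this; rw [val_N a b c ha.le hb.le hc.le hdom.le] at this
    rw [← this, Fintype.sum_sum_type, Fin.sum_univ_two, Fin.sum_univ_two]
  have h13 : y S13 i1 + y S13 j1 = a := by
    have := heff S13 ⟨i1, by decide⟩
    rw [show (assignGame ![![a, b], ![c, 0]] : Finset (Fin 2 ⊕ Fin 2) → ℝ) = _ from rfl] at this; rw [val_13 a b c ha.le] at this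
    rw [← this, Finset.sum_pair (by decide)]
  have h14 : y S14 i1 + y S14 j2 = b := by
    have := heff S14 ⟨i1, by decide⟩
    rw [show (assignGame ![![a, b], ![c, 0]] : Finset (Fin 2 ⊕ Fin 2) → ℝ) = _ from rfl] at this; rw [val_14 a b c hb.le] at this
    rw [← this, Finset.sum_pair (by decide)]
  have h23 : y S23 i2 + y S23 j1 = c := by
    have := heff S23 ⟨i2, by decide⟩
    rw [show (assignGame ![![a, b], ![c, 0]] : Finset (Fin 2 ⊕ Fin 2) → ℝ) = _ from rfl] at this; rw [val_23 a b c hc.le] at this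
    rw [← this, Finset.sum_pair (by decide)]
  have hTc : y Tc i1 + (y Tc i2 + y Tc j1) = max a c := by
    have := heff Tc ⟨i1, by decide⟩
    rw [show (assignGame ![![a, b], ![c, 0]] : Finset (Fin 2 ⊕ Fin 2) → ℝ) = _ from rfl] at this; rw [val_Tc a b c ha.le hc.le] at this
    rw [← this, Finset.sum_insert (by decide), Finset.sum_pair (by decide)]
  have hTd : y Td i1 + (y Td j1 + y Td j2) = max a b := by
    have := heff Td ⟨i1, by decide⟩
    rw [show (assignGame ![![a, b], ![c, 0]] : Finset (Fin 2 ⊕ Fin 2) → ℝ) = _ from rfl] at this; rw [val_Td a b c ha.le hb.le] at this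
    rw [← this, Finset.sum_insert (by decide), Finset.sum_pair (by decide)]
  -- monotonicity facts
  have m14_1 : y S14 i1 ≤ y univ i1 := hmono S14 univ (subset_univ _) i1 (by decide)
  have m14_4 : y S14 j2 ≤ y univ j2 := hmono S14 univ (subset_univ _) j2 (by decide)
  have m23_2 : y S23 i2 ≤ y univ i2 := hmono S23 univ (subset_univ _) i2 (by decide)
  have m23_3 : y S23 j1 ≤ y univ j1 := hmono S23 univ (subset_univ _) j1 (by decide)
  have mTc_2 : y Tc i2 ≤ y univ i2 := hmono Tc univ (subset_univ _) i2 (by decide)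
  have mTc_3 : y Tc j1 ≤ y univ j1 := hmono Tc univ (subset_univ _) j1 (by decide)
  have mTd_1 : y Td i1 ≤ y univ i1 := hmono Td univ (subset_univ _) i1 (by decide)
  have mTd_4 : y Td j2 ≤ y univ j2 := hmono Td univ (subset_univ _) j2 (by decide)
  have m23Tc_2 : y S23 i2 ≤ y Tc i2 := hmono S23 Tc (by decide) i2 (by decide)
  have m23Tc_3 : y S23 j1 ≤ y Tc j1 := hmono S23 Tc (by decide) j1 (by decide)
  have m14Td_1 : y S14 i1 ≤ y Td i1 := hmono S14 Td (by decide) i1 (by decide)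
  have m14Td_4 : y S14 j2 ≤ y Td j2 := hmono S14 Td (by decide) j2 (by decide)
  have m13Tc_1 : y S13 i1 ≤ y Tc i1 := hmono S13 Tc (by decide) i1 (by decide)
  have m13Td_3 : y S13 j1 ≤ y Td j1 := hmono S13 Td (by decide) j1 (by decide)
  -- derive contradiction
  rcases le_total a c with h | h <;> rcases le_total a b with h' | h' <;>
    [rw [max_eq_right h] at hTc; rw [max_eq_right h] at hTc;
     rw [max_eq_left h] at hTc; rw [max_eq_left h] at hTc] <;>
    [rw [max_eq_right h'] at hTd; rw [max_eq_left h'] at hTd;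
     rw [max_eq_right h'] at hTd; rw [max_eq_left h'] at hTd] <;>
    linarith
end

section
/- Let A = [a_{ij}]_{i∈I, j∈J} be a nonnegative matrix with |I|, |J| ≥ 2 that has Γ-shaped support with dominant corner. Then the assignment game (I ∪ J, w_A) is PMAS-admissible, and moreover every core allocation of (I ∪ J, w_A) is PMAS-extendable. -/
open Finset

section AuxPMAS

open Classical

variable {I J : Type*} [Fintype I] [Fintype J]

/-- max of `g` over `s`, floored at `0`. -/
noncomputable def fmax {β : Type*} (g : β → ℝ) (s : Finset β) : ℝ :=
  (insert (0:ℝ) (s.image g)).max' (Finset.insert_nonempty _ _)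

lemma fmax_nonneg {β : Type*} (g : β → ℝ) (s : Finset β) : 0 ≤ fmax g s :=
  Finset.le_max' _ _ (Finset.mem_insert_self _ _)

lemma le_fmax {β : Type*} {g : β → ℝ} {s : Finset β} {b : β} (hb : b ∈ s) : g b ≤ fmax g s :=
  Finset.le_max' _ _ (Finset.mem_insert_of_mem (Finset.mem_image_of_mem g hb))

lemma fmax_le {β : Type*} {g : β → ℝ} {s : Finset β} {c : ℝ} (h0 : 0 ≤ c)
    (h : ∀ b ∈ s, g b ≤ c) : fmax g s ≤ c := by
  apply Finset.max'_le
  intro y hy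
  rcases Finset.mem_insert.1 hy with rfl | hy
  · exact h0
  · obtain ⟨b, hb, rfl⟩ := Finset.mem_image.1 hy
    exact h b hb

lemma fmax_mono {β : Type*} {g : β → ℝ} {s t : Finset β} (hst : s ⊆ t) :
    fmax g s ≤ fmax g t :=
  fmax_le (fmax_nonneg g t) fun b hb => le_fmax (hst hb)

lemma fmax_cases {β : Type*} (g : β → ℝ) (s : Finset β) :
    fmax g s = 0 ∨ ∃ b ∈ s, fmax g s = g b := by
  have h := Finset.max'_mem (insert (0:ℝ) (s.image g)) (Finset.insert_nonempty _ _)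
  rcases Finset.mem_insert.1 h with h | h
  · exact Or.inl h
  · obtain ⟨b, hb, hbe⟩ := Finset.mem_image.1 h
    exact Or.inr ⟨b, hb, hbe.symm⟩

/-- The allocation scheme: everything goes to the two corner players. -/
noncomputable def scheme (A : I → J → ℝ) (i1 : I) (j1 : J) (c1 c2 : ℝ)
    (S : Finset (I ⊕ J)) (p : I ⊕ J) : ℝ :=
  (if p = Sum.inl i1 then
      (if Sum.inr j1 ∈ S then c1
       else fmax (A i1) (Finset.univ.filter fun l : J => Sum.inr l ∈ S)) else 0)
    + (if p = Sum.inr j1 then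
      (if Sum.inl i1 ∈ S then c2
       else fmax (fun k => A k j1) (Finset.univ.filter fun k : I => Sum.inl k ∈ S)) else 0)

lemma sum_scheme (A : I → J → ℝ) (i1 : I) (j1 : J) (c1 c2 : ℝ) (S : Finset (I ⊕ J)) :
    ∑ p ∈ S, scheme A i1 j1 c1 c2 S p =
      (if Sum.inl i1 ∈ S then
        (if Sum.inr j1 ∈ S then c1
         else fmax (A i1) (Finset.univ.filter fun l : J => Sum.inr l ∈ S)) else 0)
      + (if Sum.inr j1 ∈ S then
        (if Sum.inl i1 ∈ S then c2
         else fmax (fun k => A k j1) (Finset.univ.filter fun k : I => Sum.inl k ∈ S)) else 0) := by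
  unfold scheme
  rw [Finset.sum_add_distrib, Finset.sum_ite_eq' S (Sum.inl i1),
    Finset.sum_ite_eq' S (Sum.inr j1)]

lemma isMatching_empty (S : Finset (I ⊕ J)) : IsMatching S (∅ : Finset (I × J)) := by
  refine ⟨?_, ?_, ?_⟩ <;> simp [IsMatching]

lemma isMatching_single {S : Finset (I ⊕ J)} {i : I} {j : J}
    (hi : Sum.inl i ∈ S) (hj : Sum.inr j ∈ S) : IsMatching S {(i, j)} := by
  refine ⟨?_, ?_, ?_⟩
  · intro p hp; rw [Finset.mem_singleton] at hp; subst hp; exact ⟨hi, hj⟩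
  · intro p hp q hq _; rw [Finset.mem_singleton] at hp hq; rw [hp, hq]
  · intro p hp q hq _; rw [Finset.mem_singleton] at hp hq; rw [hp, hq]

lemma matching_sum_le (A : I → J → ℝ) {S : Finset (I ⊕ J)} (x : I ⊕ J → ℝ)
    (hx0 : ∀ p ∈ S, 0 ≤ x p)
    (hxp : ∀ i j, Sum.inl i ∈ S → Sum.inr j ∈ S → A i j ≤ x (Sum.inl i) + x (Sum.inr j))
    {μ : Finset (I × J)} (hμ : IsMatching S μ) :
    ∑ p ∈ μ, A p.1 p.2 ≤ ∑ p ∈ S, x p := by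
  obtain ⟨hmem, hinj1, hinj2⟩ := hμ
  have h1 : ∑ p ∈ μ, A p.1 p.2 ≤ ∑ p ∈ μ, (x (Sum.inl p.1) + x (Sum.inr p.2)) :=
    Finset.sum_le_sum fun p hp => hxp _ _ (hmem p hp).1 (hmem p hp).2
  have e1 : ∑ q ∈ μ.image (fun p : I × J => (Sum.inl p.1 : I ⊕ J)), x q
      = ∑ p ∈ μ, x (Sum.inl p.1) :=
    Finset.sum_image fun p hp q hq h => hinj1 p hp q hq (Sum.inl.inj h)
  have e2 : ∑ q ∈ μ.image (fun p : I × J => (Sum.inr p.2 : I ⊕ J)), x q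
      = ∑ p ∈ μ, x (Sum.inr p.2) :=
    Finset.sum_image fun p hp q hq h => hinj2 p hp q hq (Sum.inr.inj h)
  have hdisj : Disjoint (μ.image (fun p : I × J => (Sum.inl p.1 : I ⊕ J)))
      (μ.image fun p : I × J => (Sum.inr p.2 : I ⊕ J)) := by
    rw [Finset.disjoint_left]
    rintro a ha hb
    obtain ⟨p, -, rfl⟩ := Finset.mem_image.1 ha
    obtain ⟨q, -, h⟩ := Finset.mem_image.1 hb
    exact absurd h (by simp)
  have hsub : (μ.image (fun p : I × J => (Sum.inl p.1 : I ⊕ J)))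
      ∪ (μ.image fun p : I × J => (Sum.inr p.2 : I ⊕ J)) ⊆ S := by
    intro a ha
    rcases Finset.mem_union.1 ha with h | h
    · obtain ⟨p, hp, rfl⟩ := Finset.mem_image.1 h; exact (hmem p hp).1
    · obtain ⟨p, hp, rfl⟩ := Finset.mem_image.1 h; exact (hmem p hp).2
  calc ∑ p ∈ μ, A p.1 p.2
      ≤ ∑ p ∈ μ, (x (Sum.inl p.1) + x (Sum.inr p.2)) := h1
    _ = ∑ p ∈ μ, x (Sum.inl p.1) + ∑ p ∈ μ, x (Sum.inr p.2) := Finset.sum_add_distrib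
    _ = ∑ q ∈ (μ.image (fun p : I × J => (Sum.inl p.1 : I ⊕ J)))
          ∪ (μ.image fun p : I × J => (Sum.inr p.2 : I ⊕ J)), x q := by
        rw [Finset.sum_union hdisj, e1, e2]
    _ ≤ ∑ p ∈ S, x p := Finset.sum_le_sum_of_subset_of_nonneg hsub fun p hp _ => hx0 p hp

lemma scheme_nonneg {A : I → J → ℝ} {i1 : I} {j1 : J} {c1 c2 : ℝ}
    (h1 : 0 ≤ c1) (h2 : 0 ≤ c2) (S : Finset (I ⊕ J)) (p : I ⊕ J) :
    0 ≤ scheme A i1 j1 c1 c2 S p := by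
  unfold scheme
  apply add_nonneg <;> split_ifs <;>
    first | exact h1 | exact h2 | exact fmax_nonneg _ _ | exact le_rfl

lemma scheme_pair (A : I → J → ℝ) (i1 : I) (j1 : J) (hG : GammaShaped A i1 j1)
    (c1 c2 : ℝ) (h3 : c1 + c2 = A i1 j1)
    (h4 : ∀ l, l ≠ j1 → A i1 l ≤ c1) (h5 : ∀ k, k ≠ i1 → A k j1 ≤ c2)
    (S : Finset (I ⊕ J)) (i : I) (j : J) (hi : Sum.inl i ∈ S) (hj : Sum.inr j ∈ S) :
    A i j ≤ scheme A i1 j1 c1 c2 S (Sum.inl i) + scheme A i1 j1 c1 c2 S (Sum.inr j) := by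
  unfold scheme
  by_cases hii : i = i1 <;> by_cases hjj : j = j1
  · subst hii; subst hjj
    simp only [hi, hj]
    simp
    linarith
  · subst hii
    have hrow : A i j ≤ if Sum.inr j1 ∈ S then c1
        else fmax (A i) (Finset.univ.filter fun l : J => Sum.inr l ∈ S) := by
      split_ifs
      · exact h4 j hjj
      · exact le_fmax (Finset.mem_filter.2 ⟨Finset.mem_univ _, hj⟩)
    simpa [hjj] using hrow
  · subst hjj
    have hcol : A i j ≤ if Sum.inl i1 ∈ S then c2
        else fmax (fun k => A k j) (Finset.univ.filter fun k : I => Sum.inl k ∈ S) := by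
      split_ifs
      · exact h5 i hii
      · exact le_fmax (g := fun k => A k j) (Finset.mem_filter.2 ⟨Finset.mem_univ _, hi⟩)
    simpa [hii] using hcol
  · simp [hii, hjj, hG.2 i j hii hjj]

lemma assignGame_isGreatest (A : I → J → ℝ) (i1 : I) (j1 : J)
    (hG : GammaShaped A i1 j1) (c1 c2 : ℝ)
    (h1 : 0 ≤ c1) (h2 : 0 ≤ c2) (h3 : c1 + c2 = A i1 j1)
    (h4 : ∀ l, l ≠ j1 → A i1 l ≤ c1) (h5 : ∀ k, k ≠ i1 → A k j1 ≤ c2)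
    (S : Finset (I ⊕ J)) :
    IsGreatest ((fun μ : Finset (I × J) => ∑ p ∈ μ, A p.1 p.2) '' {μ | IsMatching S μ})
      (∑ p ∈ S, scheme A i1 j1 c1 c2 S p) := by
  constructor
  · rw [sum_scheme]
    by_cases hi : Sum.inl i1 ∈ S <;> by_cases hj : Sum.inr j1 ∈ S
    · refine ⟨{(i1, j1)}, isMatching_single hi hj, ?_⟩
      simp [hi, hj, h3]
    · rcases fmax_cases (A i1) (Finset.univ.filter fun l : J => Sum.inr l ∈ S) with h | ⟨l, hl, he⟩
      · refine ⟨∅, isMatching_empty S, ?_⟩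
        simp [hi, hj, h]
      · have hlS : Sum.inr l ∈ S := (Finset.mem_filter.1 hl).2
        refine ⟨{(i1, l)}, isMatching_single hi hlS, ?_⟩
        simp [hi, hj, he]
    · rcases fmax_cases (fun k => A k j1) (Finset.univ.filter fun k : I => Sum.inl k ∈ S)
        with h | ⟨k, hk, he⟩
      · refine ⟨∅, isMatching_empty S, ?_⟩
        simp [hi, hj, h]
      · have hkS : Sum.inl k ∈ S := (Finset.mem_filter.1 hk).2
        refine ⟨{(k, j1)}, isMatching_single hkS hj, ?_⟩
        simp [hi, hj, he]
    · refine ⟨∅, isMatching_empty S, ?_⟩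
      simp [hi, hj]
  · rintro v ⟨μ, hμ, rfl⟩
    exact matching_sum_le A _ (fun p _ => scheme_nonneg h1 h2 S p)
      (fun i j hi hj => scheme_pair A i1 j1 hG c1 c2 h3 h4 h5 S i j hi hj) hμ

lemma assignGame_eq_sum (A : I → J → ℝ) (i1 : I) (j1 : J)
    (hG : GammaShaped A i1 j1) (c1 c2 : ℝ)
    (h1 : 0 ≤ c1) (h2 : 0 ≤ c2) (h3 : c1 + c2 = A i1 j1)
    (h4 : ∀ l, l ≠ j1 → A i1 l ≤ c1) (h5 : ∀ k, k ≠ i1 → A k j1 ≤ c2)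
    (S : Finset (I ⊕ J)) :
    assignGame A S = ∑ p ∈ S, scheme A i1 j1 c1 c2 S p :=
  (assignGame_isGreatest A i1 j1 hG c1 c2 h1 h2 h3 h4 h5 S).csSup_eq

lemma matching_le_assignGame (A : I → J → ℝ) (i1 : I) (j1 : J)
    (hG : GammaShaped A i1 j1) (c1 c2 : ℝ)
    (h1 : 0 ≤ c1) (h2 : 0 ≤ c2) (h3 : c1 + c2 = A i1 j1)
    (h4 : ∀ l, l ≠ j1 → A i1 l ≤ c1) (h5 : ∀ k, k ≠ i1 → A k j1 ≤ c2)
    {S : Finset (I ⊕ J)} {μ : Finset (I × J)} (hμ : IsMatching S μ) :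
    ∑ p ∈ μ, A p.1 p.2 ≤ assignGame A S := by
  rw [assignGame_eq_sum A i1 j1 hG c1 c2 h1 h2 h3 h4 h5 S]
  exact (assignGame_isGreatest A i1 j1 hG c1 c2 h1 h2 h3 h4 h5 S).2 ⟨μ, hμ, rfl⟩

lemma scheme_mono (A : I → J → ℝ) (i1 : I) (j1 : J) (c1 c2 : ℝ)
    (h1 : 0 ≤ c1) (h2 : 0 ≤ c2)
    (h4 : ∀ l, l ≠ j1 → A i1 l ≤ c1) (h5 : ∀ k, k ≠ i1 → A k j1 ≤ c2)
    {S T : Finset (I ⊕ J)} (hST : S ⊆ T) (p : I ⊕ J) :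
    scheme A i1 j1 c1 c2 S p ≤ scheme A i1 j1 c1 c2 T p := by
  unfold scheme
  apply add_le_add
  · by_cases hp : p = Sum.inl i1
    · rw [if_pos hp, if_pos hp]
      by_cases hjS : Sum.inr j1 ∈ S
      · rw [if_pos hjS, if_pos (hST hjS)]
      · rw [if_neg hjS]
        by_cases hjT : Sum.inr j1 ∈ T
        · rw [if_pos hjT]
          apply fmax_le h1
          intro l hl
          have hlS := (Finset.mem_filter.1 hl).2
          refine h4 l ?_
          rintro rfl; exact hjS hlS
        · rw [if_neg hjT]
          apply fmax_mono
          intro l hl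
          exact Finset.mem_filter.2 ⟨Finset.mem_univ _, hST (Finset.mem_filter.1 hl).2⟩
    · rw [if_neg hp, if_neg hp]
  · by_cases hp : p = Sum.inr j1
    · rw [if_pos hp, if_pos hp]
      by_cases hiS : Sum.inl i1 ∈ S
      · rw [if_pos hiS, if_pos (hST hiS)]
      · rw [if_neg hiS]
        by_cases hiT : Sum.inl i1 ∈ T
        · rw [if_pos hiT]
          apply fmax_le h2
          intro k hk
          have hkS := (Finset.mem_filter.1 hk).2
          refine h5 k ?_
          rintro rfl; exact hiS hkS
        · rw [if_neg hiT]
          apply fmax_mono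
          intro k hk
          exact Finset.mem_filter.2 ⟨Finset.mem_univ _, hST (Finset.mem_filter.1 hk).2⟩
    · rw [if_neg hp, if_neg hp]

lemma scheme_isPMAS (A : I → J → ℝ) (i1 : I) (j1 : J)
    (hG : GammaShaped A i1 j1) (c1 c2 : ℝ)
    (h1 : 0 ≤ c1) (h2 : 0 ≤ c2) (h3 : c1 + c2 = A i1 j1)
    (h4 : ∀ l, l ≠ j1 → A i1 l ≤ c1) (h5 : ∀ k, k ≠ i1 → A k j1 ≤ c2) :
    IsPMAS (assignGame A) (scheme A i1 j1 c1 c2) :=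
  ⟨fun S _ => (assignGame_eq_sum A i1 j1 hG c1 c2 h1 h2 h3 h4 h5 S).symm,
   fun S T hST p _ => scheme_mono A i1 j1 c1 c2 h1 h2 h4 h5 hST p⟩

end AuxPMAS

/-- An assignment game induced by a nonnegative matrix with
Γ-shaped support and dominant corner is PMAS-admissible, and every core
allocation is PMAS-extendable. -/
theorem assignGame_gamma_dominant_pmas {I J : Type*} [Fintype I] [Fintype J]
    (h2I : 2 ≤ Fintype.card I) (h2J : 2 ≤ Fintype.card J)
    (A : I → J → ℝ) (hA : ∀ i j, 0 ≤ A i j)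
    (i1 : I) (j1 : J) (hG : GammaShaped A i1 j1) (hdom : DominantCorner A i1 j1) :
    (∃ y, IsPMAS (assignGame A) y) ∧
    ∀ x, InCore (assignGame A) x → PMASExtendable (assignGame A) x := by
  classical
  obtain ⟨k0, hk0⟩ := Fintype.exists_ne_of_one_lt_card (by omega : 1 < Fintype.card I) i1
  obtain ⟨l0, hl0⟩ := Fintype.exists_ne_of_one_lt_card (by omega : 1 < Fintype.card J) j1
  set c1 := fmax (A i1) (Finset.univ.filter fun l : J => l ≠ j1) with hc1
  have h1 : 0 ≤ c1 := fmax_nonneg _ _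
  have h4 : ∀ l, l ≠ j1 → A i1 l ≤ c1 := fun l hl =>
    le_fmax (Finset.mem_filter.2 ⟨Finset.mem_univ _, hl⟩)
  have h5 : ∀ k, k ≠ i1 → A k j1 ≤ A i1 j1 - c1 := by
    intro k hk
    have hle : c1 ≤ A i1 j1 - A k j1 := by
      apply fmax_le
      · have hd := hdom k l0 hk hl0
        have ha := hA i1 l0
        linarith
      · intro l hl
        have hd := hdom k l hk (Finset.mem_filter.1 hl).2
        linarith
    linarith
  have h2 : 0 ≤ A i1 j1 - c1 := le_trans (hA k0 j1) (h5 k0 hk0)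
  have h3 : c1 + (A i1 j1 - c1) = A i1 j1 := by ring
  constructor
  · exact ⟨scheme A i1 j1 c1 (A i1 j1 - c1),
      scheme_isPMAS A i1 j1 hG c1 _ h1 h2 h3 h4 h5⟩
  intro x hx
  have E : ∀ S, assignGame A S = ∑ p ∈ S, scheme A i1 j1 c1 (A i1 j1 - c1) S p :=
    assignGame_eq_sum A i1 j1 hG c1 _ h1 h2 h3 h4 h5
  have hle : ∀ {S : Finset (I ⊕ J)} {μ : Finset (I × J)}, IsMatching S μ →
      ∑ p ∈ μ, A p.1 p.2 ≤ assignGame A S :=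
    fun h => matching_le_assignGame A i1 j1 hG c1 _ h1 h2 h3 h4 h5 h
  have hx0 : ∀ p, 0 ≤ x p := by
    intro p
    have h := hx.2 {p}
    have h0 : (0:ℝ) ≤ assignGame A {p} := by
      have := hle (isMatching_empty {p})
      simpa using this
    rw [Finset.sum_singleton] at h
    linarith
  have hpair : ∀ (i : I) (j : J), A i j ≤ x (Sum.inl i) + x (Sum.inr j) := by
    intro i j
    have h := hx.2 {Sum.inl i, Sum.inr j}
    have h0 : A i j ≤ assignGame A {Sum.inl i, Sum.inr j} := by
      have := hle (isMatching_single (S := {Sum.inl i, Sum.inr j}) (i := i) (j := j)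
        (by simp) (by simp))
      simpa using this
    rw [Finset.sum_pair (by simp)] at h
    linarith
  have htot : ∑ p, x p = A i1 j1 := by
    have h := hx.1
    rw [E Finset.univ, sum_scheme] at h
    simp only [Finset.mem_univ, if_true] at h
    linarith
  have hij : x (Sum.inl i1) + x (Sum.inr j1) = A i1 j1 ∧
      ∀ p, p ≠ Sum.inl i1 → p ≠ Sum.inr j1 → x p = 0 := by
    have hmem1 : (Sum.inl i1 : I ⊕ J) ∈ Finset.univ := Finset.mem_univ _
    have hmem2 : (Sum.inr j1 : I ⊕ J) ∈ Finset.univ.erase (Sum.inl i1) :=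
      Finset.mem_erase.2 ⟨by simp, Finset.mem_univ _⟩
    have e1 := Finset.add_sum_erase _ x hmem1
    have e2 := Finset.add_sum_erase _ x hmem2
    set R := (Finset.univ.erase (Sum.inl i1)).erase (Sum.inr j1) with hR
    have hR0 : ∀ p ∈ R, 0 ≤ x p := fun p _ => hx0 p
    have key : x (Sum.inl i1) + (x (Sum.inr j1) + ∑ p ∈ R, x p) = A i1 j1 := by
      rw [e2, e1]
      exact htot
    have hRnonneg : 0 ≤ ∑ p ∈ R, x p := Finset.sum_nonneg hR0
    have hge := hpair i1 j1
    have hRzero : ∑ p ∈ R, x p = 0 := by linarith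
    constructor
    · linarith
    · intro p hp1 hp2
      have hpR : p ∈ R :=
        Finset.mem_erase.2 ⟨hp2, Finset.mem_erase.2 ⟨hp1, Finset.mem_univ _⟩⟩
      exact (Finset.sum_eq_zero_iff_of_nonneg hR0).1 hRzero p hpR
  have h4' : ∀ l, l ≠ j1 → A i1 l ≤ x (Sum.inl i1) := by
    intro l hl
    have hp := hpair i1 l
    have hz := hij.2 (Sum.inr l) (by simp) (by simp [hl])
    linarith
  have h5' : ∀ k, k ≠ i1 → A k j1 ≤ x (Sum.inr j1) := by
    intro k hk
    have hp := hpair k j1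
    have hz := hij.2 (Sum.inl k) (by simp [hk]) (by simp)
    linarith
  refine ⟨scheme A i1 j1 (x (Sum.inl i1)) (x (Sum.inr j1)),
    scheme_isPMAS A i1 j1 hG _ _ (hx0 _) (hx0 _) hij.1 h4' h5', ?_⟩
  intro p
  unfold scheme
  by_cases hp1 : p = Sum.inl i1
  · subst hp1; simp
  · by_cases hp2 : p = Sum.inr j1
    · subst hp2; simp
    · simp only [if_neg hp1, if_neg hp2, add_zero]
      exact (hij.2 p hp1 hp2).symm
end

section
/- Let A = [a_{ij}]_{i∈I, j∈J} be a nonnegative matrix with |I|, |J| ≥ 2 that has Γ-shaped support with corner (i1, j1). If the corner is not dominant, i.e. there exist k ≠ i1 and l ≠ j1 with a_{i1 j1} < a_{i1 l} + a_{k j1}, then the assignment game (I ∪ J, w_A) admits no PMAS. -/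
open Finset

lemma assignGame_eq_of_isGreatest {I J : Type*} [Fintype I] [Fintype J]
    (A : I → J → ℝ) (S : Finset (I ⊕ J)) (v : ℝ)
    (h1 : ∃ μ, IsMatching S μ ∧ ∑ p ∈ μ, A p.1 p.2 = v)
    (h2 : ∀ μ, IsMatching S μ → ∑ p ∈ μ, A p.1 p.2 ≤ v) :
    assignGame A S = v := by
  apply IsGreatest.csSup_eq
  constructor
  · obtain ⟨μ, hμ, hv⟩ := h1
    exact ⟨μ, hμ, hv⟩
  · rintro x ⟨μ, hμ, rfl⟩
    exact h2 μ hμ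

lemma isMatching_singleton {I J : Type*} (S : Finset (I ⊕ J)) (p : I × J)
    (h1 : Sum.inl p.1 ∈ S) (h2 : Sum.inr p.2 ∈ S) :
    IsMatching S {p} := by
  refine ⟨?_, ?_, ?_⟩ <;> intro q hq <;> simp_all

lemma matching_eq_singleton_of_mem_left {I J : Type*} {S : Finset (I ⊕ J)}
    {μ : Finset (I × J)} (hμ : IsMatching S μ) {i : I}
    (hall : ∀ p ∈ μ, p.1 = i) {p : I × J} (hp : p ∈ μ) : μ = {p} := by
  apply Finset.eq_singleton_iff_unique_mem.mpr
  exact ⟨hp, fun q hq => hμ.2.1 q hq p hp ((hall q hq).trans (hall p hp).symm)⟩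

lemma matching_eq_singleton_of_mem_right {I J : Type*} {S : Finset (I ⊕ J)}
    {μ : Finset (I × J)} (hμ : IsMatching S μ) {j : J}
    (hall : ∀ p ∈ μ, p.2 = j) {p : I × J} (hp : p ∈ μ) : μ = {p} := by
  apply Finset.eq_singleton_iff_unique_mem.mpr
  exact ⟨hp, fun q hq => hμ.2.2 q hq p hp ((hall q hq).trans (hall p hp).symm)⟩

lemma assignGame_pair {I J : Type*} [Fintype I] [Fintype J]
    [DecidableEq I] [DecidableEq J]
    (A : I → J → ℝ) (hA : ∀ i j, 0 ≤ A i j) (i : I) (j : J) :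
    assignGame A {Sum.inl i, Sum.inr j} = A i j := by
  apply assignGame_eq_of_isGreatest
  · exact ⟨{(i,j)}, isMatching_singleton _ _ (by simp) (by simp), by simp⟩
  · intro μ hμ
    rcases μ.eq_empty_or_nonempty with rfl | ⟨p, hp⟩
    · simpa using hA i j
    · have hall : ∀ q ∈ μ, q.1 = i := by
        intro q hq
        have := (hμ.1 q hq).1
        simpa using this
      have hq2 : ∀ q ∈ μ, q.2 = j := by
        intro q hq
        have := (hμ.1 q hq).2
        simpa using this
      rw [matching_eq_singleton_of_mem_left hμ hall hp]
      rw [Finset.sum_singleton, hall p hp, hq2 p hp]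

lemma assignGame_tripleJ {I J : Type*} [Fintype I] [Fintype J]
    [DecidableEq I] [DecidableEq J]
    (A : I → J → ℝ) (hA : ∀ i j, 0 ≤ A i j) (i : I) (j l : J) :
    assignGame A {Sum.inl i, Sum.inr j, Sum.inr l} = max (A i j) (A i l) := by
  apply assignGame_eq_of_isGreatest
  · rcases le_total (A i j) (A i l) with h | h
    · exact ⟨{(i,l)}, isMatching_singleton _ _ (by simp) (by simp),
        by simp [max_eq_right h]⟩
    · exact ⟨{(i,j)}, isMatching_singleton _ _ (by simp) (by simp),
        by simp [max_eq_left h]⟩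
  · intro μ hμ
    rcases μ.eq_empty_or_nonempty with rfl | ⟨p, hp⟩
    · simpa using le_max_of_le_left (hA i j)
    · have hall : ∀ q ∈ μ, q.1 = i := by
        intro q hq
        have := (hμ.1 q hq).1
        simpa using this
      have hq2 : ∀ q ∈ μ, q.2 = j ∨ q.2 = l := by
        intro q hq
        have := (hμ.1 q hq).2
        simpa using this
      rw [matching_eq_singleton_of_mem_left hμ hall hp, Finset.sum_singleton,
        hall p hp]
      rcases hq2 p hp with h | h <;> rw [h]
      · exact le_max_left _ _
      · exact le_max_right _ _

lemma assignGame_tripleI {I J : Type*} [Fintype I] [Fintype J]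
    [DecidableEq I] [DecidableEq J]
    (A : I → J → ℝ) (hA : ∀ i j, 0 ≤ A i j) (i k : I) (j : J) :
    assignGame A {Sum.inl i, Sum.inl k, Sum.inr j} = max (A i j) (A k j) := by
  apply assignGame_eq_of_isGreatest
  · rcases le_total (A i j) (A k j) with h | h
    · exact ⟨{(k,j)}, isMatching_singleton _ _ (by simp) (by simp),
        by simp [max_eq_right h]⟩
    · exact ⟨{(i,j)}, isMatching_singleton _ _ (by simp) (by simp),
        by simp [max_eq_left h]⟩
  · intro μ hμ
    rcases μ.eq_empty_or_nonempty with rfl | ⟨p, hp⟩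
    · simpa using le_max_of_le_left (hA i j)
    · have hall : ∀ q ∈ μ, q.2 = j := by
        intro q hq
        have := (hμ.1 q hq).2
        simpa using this
      have hq1 : ∀ q ∈ μ, q.1 = i ∨ q.1 = k := by
        intro q hq
        have := (hμ.1 q hq).1
        simpa using this
      rw [matching_eq_singleton_of_mem_right hμ hall hp, Finset.sum_singleton,
        hall p hp]
      rcases hq1 p hp with h | h <;> rw [h]
      · exact le_max_left _ _
      · exact le_max_right _ _

/-- An assignment game induced by a matrix with Γ-shaped support
whose corner is not dominant admits no PMAS. -/
theorem assignGame_gamma_nondominant_no_pmas {I J : Type*} [Fintype I] [Fintype J]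
    (h2I : 2 ≤ Fintype.card I) (h2J : 2 ≤ Fintype.card J)
    (A : I → J → ℝ) (hA : ∀ i j, 0 ≤ A i j)
    (i1 : I) (j1 : J) (hG : GammaShaped A i1 j1)
    (hnd : ∃ k l, k ≠ i1 ∧ l ≠ j1 ∧ A i1 j1 < A i1 l + A k j1) :
    ¬ ∃ y, IsPMAS (assignGame A) y := by
  classical
  rintro ⟨y, heff, hmono⟩
  obtain ⟨k, l, hk, hl, hlt⟩ := hnd
  set a := A i1 j1 with ha_def
  set b := A i1 l with hb_def
  set c := A k j1 with hc_def
  have ha : 0 < a := hG.1 i1 j1 (Or.inl rfl)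
  have hb : 0 < b := hG.1 i1 l (Or.inl rfl)
  have hc : 0 < c := hG.1 k j1 (Or.inr rfl)
  set S1 : Finset (I ⊕ J) := {Sum.inl i1, Sum.inr j1} with hS1
  set S2 : Finset (I ⊕ J) := {Sum.inl i1, Sum.inr l} with hS2
  set T1 : Finset (I ⊕ J) := {Sum.inl i1, Sum.inr j1, Sum.inr l} with hT1
  set T2 : Finset (I ⊕ J) := {Sum.inl i1, Sum.inl k, Sum.inr j1} with hT2
  set S3 : Finset (I ⊕ J) := {Sum.inl k, Sum.inr j1} with hS3
  have hne1 : (Sum.inl i1 : I ⊕ J) ≠ Sum.inr j1 := by simp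
  have hne2 : (Sum.inl i1 : I ⊕ J) ≠ Sum.inr l := by simp
  have hne3 : (Sum.inr j1 : I ⊕ J) ≠ Sum.inr l := by
    simp only [ne_eq, Sum.inr.injEq]; exact Ne.symm hl
  have hne4 : (Sum.inl k : I ⊕ J) ≠ Sum.inr j1 := by simp
  have hne5 : (Sum.inl i1 : I ⊕ J) ≠ Sum.inl k := by
    simp only [ne_eq, Sum.inl.injEq]; exact Ne.symm hk
  -- game values
  have wS1 : assignGame A S1 = a := assignGame_pair A hA i1 j1
  have wS2 : assignGame A S2 = b := assignGame_pair A hA i1 l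
  have wS3 : assignGame A S3 = c := assignGame_pair A hA k j1
  have wT1 : assignGame A T1 = max a b := assignGame_tripleJ A hA i1 j1 l
  have wT2 : assignGame A T2 = max a c := assignGame_tripleI A hA i1 k j1
  -- efficiency equations
  have eS1 : y S1 (Sum.inl i1) + y S1 (Sum.inr j1) = a := by
    have := heff S1 ⟨_, Finset.mem_insert_self _ _⟩
    rwa [hS1, Finset.sum_pair hne1, wS1] at this
  have eS2 : y S2 (Sum.inl i1) + y S2 (Sum.inr l) = b := by
    have := heff S2 ⟨_, Finset.mem_insert_self _ _⟩
    rwa [hS2, Finset.sum_pair hne2, wS2] at this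
  have eS3 : y S3 (Sum.inl k) + y S3 (Sum.inr j1) = c := by
    have := heff S3 ⟨_, Finset.mem_insert_self _ _⟩
    rwa [hS3, Finset.sum_pair hne4, wS3] at this
  have eT1 : y T1 (Sum.inl i1) + (y T1 (Sum.inr j1) + y T1 (Sum.inr l)) = max a b := by
    have := heff T1 ⟨_, Finset.mem_insert_self _ _⟩
    rwa [hT1, Finset.sum_insert (by simp [hne1, hne2]), Finset.sum_pair hne3, wT1] at this
  have eT2 : y T2 (Sum.inl i1) + (y T2 (Sum.inl k) + y T2 (Sum.inr j1)) = max a c := by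
    have := heff T2 ⟨_, Finset.mem_insert_self _ _⟩
    rwa [hT2, Finset.sum_insert (by simp [hS3, Ne.symm hk]), Finset.sum_pair hne4, wT2] at this
  -- monotonicity
  have hS2T1 : S2 ⊆ T1 :=
    Finset.insert_subset_insert _ (Finset.subset_insert _ _)
  have hS3T2 : S3 ⊆ T2 := Finset.subset_insert _ _
  have hS1T1 : S1 ⊆ T1 :=
    Finset.insert_subset_insert _
      (Finset.singleton_subset_iff.mpr (Finset.mem_insert_self _ _))
  have hS1T2 : S1 ⊆ T2 :=
    Finset.insert_subset_insert _
      (Finset.singleton_subset_iff.mpr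
        (Finset.mem_insert_of_mem (Finset.mem_singleton_self _)))
  have m1 : y S2 (Sum.inl i1) ≤ y T1 (Sum.inl i1) :=
    hmono S2 T1 hS2T1 _ (Finset.mem_insert_self _ _)
  have m2 : y S2 (Sum.inr l) ≤ y T1 (Sum.inr l) :=
    hmono S2 T1 hS2T1 _ (Finset.mem_insert_of_mem (Finset.mem_singleton_self _))
  have m3 : y S3 (Sum.inl k) ≤ y T2 (Sum.inl k) :=
    hmono S3 T2 hS3T2 _ (Finset.mem_insert_self _ _)
  have m4 : y S3 (Sum.inr j1) ≤ y T2 (Sum.inr j1) :=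
    hmono S3 T2 hS3T2 _ (Finset.mem_insert_of_mem (Finset.mem_singleton_self _))
  have m5 : y S1 (Sum.inr j1) ≤ y T1 (Sum.inr j1) :=
    hmono S1 T1 hS1T1 _ (Finset.mem_insert_of_mem (Finset.mem_singleton_self _))
  have m6 : y S1 (Sum.inl i1) ≤ y T2 (Sum.inl i1) :=
    hmono S1 T2 hS1T2 _ (Finset.mem_insert_self _ _)
  -- key inequalities
  have key1 : y T1 (Sum.inr j1) ≤ max a b - b := by linarith
  have key2 : y T2 (Sum.inl i1) ≤ max a c - c := by linarith
  have key : a ≤ (max a c - c) + (max a b - b) := by linarith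
  rcases max_cases a b with ⟨h1, _⟩ | ⟨h1, h1'⟩ <;>
    rcases max_cases a c with ⟨h2, _⟩ | ⟨h2, h2'⟩ <;>
    rw [h1, h2] at key <;> linarith
end
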